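/- arXiv:2106.00555 — 3 statements merged into one kernel-verified Lean document; each statement's English description precedes it below -/
import Mathlib

section
/- Let r ≤ m, let ω_1,…,ω_r be positive reals, and let μ_1,…,μ_r ∈ ℝ^m be linearly independent. Then the homogeneous cubic T(X) = Σ_{i=1}^r ω_i (μ_i·X)³ has complex Waring rank exactly r: T admits a decomposition as a sum of r cubes of linear forms, and there is no decomposition T(X) = Σ_{i=1}^{r'} ω'_i (μ'_i·X)³ with r' < r, ω'_i ∈ ℂ and μ'_i ∈ ℂ^m. -/
open MvPolynomial

/-- The linear form `v·X = v₁X₁ + ⋯ + vₘXₘ`. -/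
noncomputable def linForm {m : ℕ} (v : Fin m → ℂ) : MvPolynomial (Fin m) ℂ :=
  ∑ i, C (v i) * X i

lemma pderiv_linForm {m : ℕ} (v : Fin m → ℂ) (j : Fin m) :
    pderiv j (linForm v) = C (v j) := by
  classical
  simp [linForm, Pi.single_apply, Finset.sum_ite_eq', mul_ite]

lemma pderiv_cube {m : ℕ} (a : ℂ) (v : Fin m → ℂ) (j : Fin m) :
    pderiv j (C a * linForm v ^ 3) = C (3 * a * v j) * linForm v ^ 2 := by
  rw [pderiv_C_mul, pderiv_pow, pderiv_linForm]
  have h3 : ((3:ℕ) : MvPolynomial (Fin m) ℂ) = C 3 := by simp [map_ofNat]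
  rw [h3]
  rw [show (3:ℂ) * a * v j = a * (3 * v j) by ring, C_mul, C_mul]
  ring

lemma pderiv_pderiv_sq {m : ℕ} (v : Fin m → ℂ) (j j' : Fin m) :
    pderiv j' (pderiv j (linForm v ^ 2)) = C (2 * v j * v j') := by
  have h1 : pderiv j (linForm v ^ 2) = C (2 * v j) * linForm v := by
    rw [pderiv_pow, pderiv_linForm, pow_one]
    have h2 : ((2:ℕ) : MvPolynomial (Fin m) ℂ) = C 2 := by simp [map_ofNat]
    rw [h2, C_mul]
    ring
  rw [h1, pderiv_C_mul, pderiv_linForm, ← C_mul]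

lemma exists_dual_family {m r : ℕ} (μ : Fin r → Fin m → ℝ) (hμ : LinearIndependent ℝ μ) :
    ∃ v : Fin r → Fin m → ℝ, ∀ i k, (∑ j, μ k j * v i j) = if i = k then 1 else 0 := by
  classical
  set p := Submodule.span ℝ (Set.range μ) with hp
  let b : Module.Basis (Fin r) ℝ p := Module.Basis.span hμ
  choose g hg using fun i => LinearMap.exists_extend (b.coord i)
  refine ⟨fun i j => g i (Pi.single j 1), fun i k => ?_⟩
  have hμk : (μ k : Fin m → ℝ) = ∑ j, μ k j • (Pi.single j 1 : Fin m → ℝ) := by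
    ext j'
    simp [Finset.sum_apply, Pi.single_apply, mul_comm]
  have h1 : g i (μ k) = ∑ j, μ k j * g i (Pi.single j 1) := by
    conv_lhs => rw [hμk]
    rw [map_sum]
    simp [map_smul, smul_eq_mul]
  rw [← h1]
  have h2 : μ k = p.subtype (b k) := congrArg Subtype.val (Module.Basis.span_apply hμ k).symm
  rw [h2, ← LinearMap.comp_apply, hg i, Module.Basis.coord_apply, Module.Basis.repr_self_apply]
  simp [eq_comm]

/-- for r ≤ m, ω_i > 0 and μ₁,…,μ_r ∈ ℝ^m linearly independent, the cubic
T = Σ ω_i (μ_i·X)³ has complex Waring rank exactly r: it is a sum of r cubes of linear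
forms, and admits no decomposition into fewer than r cubes of complex linear forms. -/
theorem statement_5 (m r : ℕ) (hrm : r ≤ m)
    (ω : Fin r → ℝ) (hω : ∀ i, 0 < ω i)
    (μ : Fin r → Fin m → ℝ) (hμ : LinearIndependent ℝ μ)
    (T : MvPolynomial (Fin m) ℂ)
    (hT : T = ∑ i, C ((ω i : ℂ)) * linForm (fun j => (μ i j : ℂ)) ^ 3) :
    (∃ (ω' : Fin r → ℂ) (ξ : Fin r → Fin m → ℂ),
        T = ∑ i, C (ω' i) * linForm (ξ i) ^ 3) ∧
    ∀ r' : ℕ, r' < r →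
      ¬ ∃ (ω' : Fin r' → ℂ) (ξ : Fin r' → Fin m → ℂ),
          T = ∑ i, C (ω' i) * linForm (ξ i) ^ 3 := by
  classical
  constructor
  · exact ⟨fun i => (ω i : ℂ), fun i j => (μ i j : ℂ), hT⟩
  rintro r' hr' ⟨ω', ξ, hT'⟩
  obtain ⟨v, hv⟩ := exists_dual_family μ hμ
  have hvC : ∀ i k, (∑ j, ((μ k j : ℂ)) * ((v i j : ℂ))) = if i = k then 1 else 0 := by
    intro i k
    have : (∑ j, ((μ k j : ℂ)) * ((v i j : ℂ))) = (((∑ j, μ k j * v i j : ℝ)) : ℂ) := by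
      push_cast; ring_nf
    rw [this, hv i k]
    split <;> simp
  set e : Fin r → MvPolynomial (Fin m) ℂ :=
    fun i => linForm (fun j => (μ i j : ℂ)) ^ 2 with he
  set q : Fin r' → MvPolynomial (Fin m) ℂ := fun k => linForm (ξ k) ^ 2 with hq
  set S := Submodule.span ℂ (Set.range q) with hS
  -- the partial derivatives of T, two ways
  have hw : ∀ j, pderiv j T = ∑ i, C (3 * (ω i : ℂ) * (μ i j : ℂ)) * e i := by
    intro j
    rw [hT, map_sum]
    exact Finset.sum_congr rfl fun i _ => pderiv_cube _ _ _
  have hw' : ∀ j, pderiv j T = ∑ k, C (3 * ω' k * ξ k j) * q k := by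
    intro j
    rw [hT', map_sum]
    exact Finset.sum_congr rfl fun k _ => pderiv_cube _ _ _
  have hwS : ∀ j, pderiv j T ∈ S := by
    intro j
    rw [hw' j]
    refine Submodule.sum_mem _ fun k _ => ?_
    rw [← smul_eq_C_mul]
    exact S.smul_mem _ (Submodule.subset_span ⟨k, rfl⟩)
  -- each e i lies in S
  have heS : ∀ i, e i ∈ S := by
    intro i
    have key : ∑ j, C ((v i j : ℂ)) * pderiv j T = C (3 * (ω i : ℂ)) * e i := by
      have : ∀ j, C ((v i j : ℂ)) * pderiv j T
          = ∑ k, C (3 * (ω k : ℂ) * ((μ k j : ℂ) * (v i j : ℂ))) * e k := by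
        intro j
        rw [hw j, Finset.mul_sum]
        refine Finset.sum_congr rfl fun k _ => ?_
        rw [← mul_assoc, ← C_mul]
        ring_nf
      simp_rw [this]
      rw [Finset.sum_comm]
      have : ∀ k, ∑ j, C (3 * (ω k : ℂ) * ((μ k j : ℂ) * (v i j : ℂ))) * e k
          = C (3 * (ω k : ℂ) * (if i = k then 1 else 0)) * e k := by
        intro k
        rw [← Finset.sum_mul, ← map_sum, ← Finset.mul_sum, hvC i k]
      simp_rw [this]
      rw [Finset.sum_eq_single i]
      · simp
      · intro k _ hk
        simp [Ne.symm hk]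
      · simp
    have hne : (3 * (ω i : ℂ)) ≠ 0 := by
      have := (hω i).ne'
      simp only [ne_eq, mul_eq_zero, not_or]
      exact ⟨by norm_num, by exact_mod_cast this⟩
    have hei : e i = C (3 * (ω i : ℂ))⁻¹ * ∑ j, C ((v i j : ℂ)) * pderiv j T := by
      rw [key, ← mul_assoc, ← C_mul, inv_mul_cancel₀ hne, C_1, one_mul]
    rw [hei, ← smul_eq_C_mul]
    refine S.smul_mem _ (Submodule.sum_mem _ fun j _ => ?_)
    rw [← smul_eq_C_mul]
    exact S.smul_mem _ (hwS j)
  -- the e i are linearly independent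
  have hind : LinearIndependent ℂ e := by
    rw [Fintype.linearIndependent_iff]
    intro c hc k
    have hc' : ∑ i, C (c i) * e i = 0 := by
      rw [← hc]
      exact Finset.sum_congr rfl fun i _ => (smul_eq_C_mul _ _).symm
    have h2 : ∀ j j' : Fin m, ∑ i, c i * (2 * (μ i j : ℂ) * (μ i j' : ℂ)) = 0 := by
      intro j j'
      have := congrArg (pderiv j') (congrArg (pderiv j) hc')
      simp only [map_sum, pderiv_C_mul, map_zero] at this
      simp_rw [he, pderiv_pderiv_sq, ← C_mul] at this
      rw [← map_sum] at this
      exact C_injective _ _ (this.trans C_0.symm)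
    obtain ⟨j', hj'⟩ : ∃ j', μ k j' ≠ 0 := by
      by_contra h
      push_neg at h
      exact hμ.ne_zero k (funext h)
    have h3 : ∑ j, ((v k j : ℂ)) * (∑ i, c i * (2 * (μ i j : ℂ) * (μ i j' : ℂ))) = 0 := by
      simp [h2]
    have h4 : ∑ j, ((v k j : ℂ)) * (∑ i, c i * (2 * (μ i j : ℂ) * (μ i j' : ℂ)))
        = ∑ i, c i * 2 * (μ i j' : ℂ) * (∑ j, ((μ i j : ℂ)) * ((v k j : ℂ))) := by
      simp_rw [Finset.mul_sum]
      rw [Finset.sum_comm]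
      refine Finset.sum_congr rfl fun i _ => Finset.sum_congr rfl fun j _ => by ring
    rw [h4] at h3
    simp_rw [hvC k] at h3
    rw [Finset.sum_eq_single k] at h3
    · have hμ' : (μ k j' : ℂ) ≠ 0 := by exact_mod_cast hj'
      simpa [hμ'] using h3
    · intro i _ hik
      simp [Ne.symm hik]
    · simp
  -- dimension count
  haveI : Module.Finite ℂ S := FiniteDimensional.span_of_finite ℂ (Set.finite_range q)
  let eS : Fin r → S := fun i => ⟨e i, heS i⟩
  have hindS : LinearIndependent ℂ eS := by
    apply LinearIndependent.of_comp S.subtype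
    convert hind
    rfl
  have h5 : r ≤ Module.finrank ℂ S := by
    simpa using hindS.fintype_card_le_finrank
  have h6 : Module.finrank ℂ S ≤ r' := by
    have := finrank_range_le_card (R := ℂ) q
    rw [Fintype.card_fin] at this
    exact this
  omega
end

section
/- Let r ≤ m, let ω_1,…,ω_r be positive reals, let μ_1,…,μ_r ∈ ℝ^m be linearly independent, and let T(X) = Σ_{i=1}^r ω_i (μ_i·X)³. Then T is identifiable: for any decomposition T(X) = Σ_{i=1}^r ω'_i (μ'_i·X)³ with ω'_i ∈ ℂ nonzero and μ'_i ∈ ℂ^m, there exist a permutation π of {1,…,r} and nonzero scalars λ_1,…,λ_r ∈ ℂ such that μ'_i = λ_i μ_{π(i)} and ω'_i = λ_i^{−3} ω_{π(i)} for all i. -/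
open MvPolynomial

open Finset


noncomputable def dotc {m : ℕ} (u x : Fin m → ℂ) : ℂ := ∑ j, u j * x j

lemma dotc_add {m : ℕ} (u x y : Fin m → ℂ) : dotc u (x + y) = dotc u x + dotc u y := by
  simp [dotc, mul_add, Finset.sum_add_distrib]

lemma dotc_single {m : ℕ} (u : Fin m → ℂ) (j : Fin m) : dotc u (Pi.single j 1) = u j := by
  simp [dotc, Pi.single_apply]

lemma eval_linForm {m : ℕ} (v x : Fin m → ℂ) : eval x (linForm v) = dotc v x := by
  simp [linForm, dotc]

-- complexification of linear independence
lemma linIndep_complex {m r : ℕ} (μ : Fin r → Fin m → ℝ) (hμ : LinearIndependent ℝ μ) :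
    LinearIndependent ℂ (fun i j => (μ i j : ℂ)) := by
  rw [Fintype.linearIndependent_iff] at hμ ⊢
  intro g hg i
  have h1 : ∀ j, (∑ i, g i * (μ i j : ℂ)) = 0 := by
    intro j
    have := congrFun hg j
    simpa [Finset.sum_apply] using this
  have hre : ∀ i, (g i).re = 0 := by
    intro i
    refine hμ (fun i => (g i).re) ?_ i
    funext j
    have := congrArg Complex.re (h1 j)
    simpa [Complex.re_sum, Complex.mul_re] using this
  have him : ∀ i, (g i).im = 0 := by
    intro i
    refine hμ (fun i => (g i).im) ?_ i
    funext j
    have := congrArg Complex.im (h1 j)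
    simpa [Complex.im_sum, Complex.mul_im] using this
  exact Complex.ext (hre i) (him i)

-- existence of a dual family
lemma exists_dual {m r : ℕ} (w : Fin r → Fin m → ℂ) (hw : LinearIndependent ℂ w) :
    ∃ v : Fin r → Fin m → ℂ, ∀ i k, dotc (w i) (v k) = if i = k then 1 else 0 := by
  classical
  have key : ∀ k : Fin r, ∃ vk : Fin m → ℂ, ∀ i, dotc (w i) vk = if i = k then 1 else 0 := by
    intro k
    have hnot : w k ∉ Submodule.span ℂ (w '' {k}ᶜ) := hw.notMem_span_image (by simp)
    obtain ⟨f, hf0, hfbot⟩ :=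
      (Submodule.span ℂ (w '' {k}ᶜ)).exists_dual_map_eq_bot_of_notMem hnot inferInstance
    -- scale f so that f (w k) = 1
    set g : Module.Dual ℂ (Fin m → ℂ) := (f (w k))⁻¹ • f with hg
    have hgk : g (w k) = 1 := by
      simp [hg, inv_mul_cancel₀ hf0]
    have hgvanish : ∀ i, i ≠ k → g (w i) = 0 := by
      intro i hik
      have hmem : w i ∈ Submodule.span ℂ (w '' {k}ᶜ) :=
        Submodule.subset_span ⟨i, by simp [hik], rfl⟩
      have : f (w i) = 0 := by
        have := hfbot.le (Submodule.mem_map_of_mem hmem)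
        simpa using this
      simp [hg, this]
    refine ⟨fun j => g (Pi.single j 1), fun i => ?_⟩
    have hx : (w i) = ∑ j, (w i j) • (Pi.single j 1 : Fin m → ℂ) := by
      funext j'
      simp [Pi.single_apply, Finset.sum_apply]
    have : dotc (w i) (fun j => g (Pi.single j 1)) = g (w i) := by
      conv_rhs => rw [hx]
      rw [map_sum]
      simp [dotc, g.map_smul, smul_eq_mul]
    rw [this]
    by_cases hik : i = k
    · subst hik; simp [hgk]
    · simp [hik, hgvanish i hik]
  choose v hv using key
  exact ⟨v, fun i k => hv k i⟩

-- polarization: from cubic identity to trilinear identity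
lemma tri_of_cubic {m r : ℕ} (w w' : Fin r → ℂ) (u u' : Fin r → Fin m → ℂ)
    (h : ∀ x, ∑ i, w i * (dotc (u i) x) ^ 3 = ∑ i, w' i * (dotc (u' i) x) ^ 3) :
    ∀ x y z, ∑ i, w i * (dotc (u i) x * dotc (u i) y * dotc (u i) z)
      = ∑ i, w' i * (dotc (u' i) x * dotc (u' i) y * dotc (u' i) z) := by
  intro x y z
  have expand : ∀ (B : Fin r → ℂ) (v : Fin r → Fin m → ℂ),
      (6 : ℂ) * ∑ i, B i * (dotc (v i) x * dotc (v i) y * dotc (v i) z)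
      = (∑ i, B i * (dotc (v i) (x+y+z)) ^ 3) - (∑ i, B i * (dotc (v i) (x+y)) ^ 3)
        - (∑ i, B i * (dotc (v i) (y+z)) ^ 3) - (∑ i, B i * (dotc (v i) (x+z)) ^ 3)
        + (∑ i, B i * (dotc (v i) x) ^ 3) + (∑ i, B i * (dotc (v i) y) ^ 3)
        + (∑ i, B i * (dotc (v i) z) ^ 3) := by
    intro B v
    simp only [dotc_add, Finset.mul_sum, ← Finset.sum_sub_distrib, ← Finset.sum_add_distrib]
    apply Finset.sum_congr rfl
    intro i _
    ring
  have h6 : (6 : ℂ) * ∑ i, w i * (dotc (u i) x * dotc (u i) y * dotc (u i) z)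
      = (6 : ℂ) * ∑ i, w' i * (dotc (u' i) x * dotc (u' i) y * dotc (u' i) z) := by
    rw [expand w u, expand w' u', h, h, h, h, h, h, h]
  exact mul_left_cancel₀ (by norm_num) h6

lemma dotc_sum_smul {m r : ℕ} (c : Fin r → ℂ) (u : Fin r → Fin m → ℂ) (y : Fin m → ℂ) :
    dotc (∑ j, c j • u j) y = ∑ j, c j * dotc (u j) y := by
  simp only [dotc, Finset.sum_apply, Pi.smul_apply, smul_eq_mul, Finset.sum_mul,
    Finset.mul_sum, mul_assoc]
  exact Finset.sum_comm

open Matrix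

/-- for r ≤ m, ω_i > 0 and μ₁,…,μ_r ∈ ℝ^m linearly independent,
T = Σ ω_i (μ_i·X)³ is identifiable: any decomposition T = Σ ω'_i (μ'_i·X)³ with r terms
and nonzero ω'_i agrees with the given one up to permutation and scaling,
μ'_i = λ_i μ_{π(i)} and ω'_i = λ_i⁻³ ω_{π(i)}. -/
theorem statement_6 (m r : ℕ) (hrm : r ≤ m)
    (ω : Fin r → ℝ) (hω : ∀ i, 0 < ω i)
    (μ : Fin r → Fin m → ℝ) (hμ : LinearIndependent ℝ μ)
    (T : MvPolynomial (Fin m) ℂ)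
    (hT : T = ∑ i, C ((ω i : ℂ)) * linForm (fun j => (μ i j : ℂ)) ^ 3)
    (ω' : Fin r → ℂ) (hω' : ∀ i, ω' i ≠ 0) (μ' : Fin r → Fin m → ℂ)
    (hT' : T = ∑ i, C (ω' i) * linForm (μ' i) ^ 3) :
    ∃ (π : Equiv.Perm (Fin r)) (lam : Fin r → ℂ),
      ∀ i, lam i ≠ 0 ∧ μ' i = lam i • (fun j => (μ (π i) j : ℂ)) ∧
        ω' i = (lam i) ^ (-3 : ℤ) * (ω (π i) : ℂ) := by
  classical
  set μc : Fin r → Fin m → ℂ := fun i j => (μ i j : ℂ) with hμcdef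
  have hμc : LinearIndependent ℂ μc := linIndep_complex μ hμ
  have hωc : ∀ i, (ω i : ℂ) ≠ 0 := fun i => Complex.ofReal_ne_zero.2 (hω i).ne'
  -- step 0 : evaluation identity
  have h0 : ∀ x, ∑ i, (ω i : ℂ) * (dotc (μc i) x) ^ 3 = ∑ i, ω' i * (dotc (μ' i) x) ^ 3 := by
    intro x
    have hAB := hT.symm.trans hT'
    have := congrArg (eval x) hAB
    simpa [map_sum, _root_.map_mul, map_pow, eval_C, eval_linForm] using this
  -- step 1 : trilinear identity
  have htri := tri_of_cubic (fun i => (ω i : ℂ)) ω' μc μ' h0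
  -- step 2 : dual family
  obtain ⟨v, hv⟩ := exists_dual μc hμc
  -- step 3 : span inclusion : each μc k lies in the span of μ'
  have hspan1 : ∀ k, μc k ∈ Submodule.span ℂ (Set.range μ') := by
    intro k
    rw [Submodule.mem_span_range_iff_exists_fun]
    refine ⟨fun i => (ω k : ℂ)⁻¹ * (ω' i * (dotc (μ' i) (v k)) ^ 2), ?_⟩
    have h1 := fun x => htri x (v k) (v k)
    funext j
    have h2 := h1 (Pi.single j 1)
    simp only [hv, dotc_single, mul_ite, ite_mul, one_mul, mul_one, zero_mul, mul_zero,
      Finset.sum_ite_eq', Finset.mem_univ, if_true] at h2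
    -- h2 : (ω k) * μc k j = ∑ i, ω' i * (μ' i j * dotc (μ' i) (v k) * dotc (μ' i) (v k))
    have : μc k j = (ω k : ℂ)⁻¹ * ∑ i, ω' i * (μ' i j * dotc (μ' i) (v k) * dotc (μ' i) (v k)) := by
      rw [← h2, ← mul_assoc, inv_mul_cancel₀ (hωc k), one_mul]
    rw [Finset.sum_apply]
    simp only [Pi.smul_apply, smul_eq_mul]
    rw [this, Finset.mul_sum]
    apply Finset.sum_congr rfl
    intro i _
    ring
  -- step 4 : spans agree, extract coefficients
  have hle : Submodule.span ℂ (Set.range μc) ≤ Submodule.span ℂ (Set.range μ') := by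
    rw [Submodule.span_le]
    rintro _ ⟨k, rfl⟩
    exact hspan1 k
  have hr1 : Module.finrank ℂ (Submodule.span ℂ (Set.range μc)) = r := by
    rw [finrank_span_eq_card hμc, Fintype.card_fin]
  have hr2 : Module.finrank ℂ (Submodule.span ℂ (Set.range μ')) ≤ r := by
    have := finrank_span_le_card (R := ℂ) (Set.range μ')
    refine le_trans this ?_
    rw [Set.toFinset_range]
    exact le_trans (Finset.card_image_le) (by simp)
  have hspaneq : Submodule.span ℂ (Set.range μc) = Submodule.span ℂ (Set.range μ') :=
    Submodule.eq_of_le_of_finrank_le hle (by rw [hr1]; exact hr2)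
  have hmem : ∀ i, μ' i ∈ Submodule.span ℂ (Set.range μc) := by
    intro i
    rw [hspaneq]
    exact Submodule.subset_span ⟨i, rfl⟩
  have hc0 : ∀ i, ∃ ci : Fin r → ℂ, ∑ j, ci j • μc j = μ' i := by
    intro i
    exact (Submodule.mem_span_range_iff_exists_fun ℂ).1 (hmem i)
  choose c hc using hc0
  -- dotc of μ' against dual vectors
  have hq : ∀ i a, dotc (μ' i) (v a) = c i a := by
    intro i a
    rw [← hc i, dotc_sum_smul]
    simp [hv]
  -- step 5 : diagonal tensor identity
  have hten : ∀ a b d : Fin r, ∑ i, ω' i * (c i a * c i b * c i d)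
      = if a = b then (if b = d then (ω a : ℂ) else 0) else 0 := by
    intro a b d
    have h3 := htri (v a) (v b) (v d)
    simp only [hv, hq] at h3
    rw [← h3]
    simp only [mul_ite, ite_mul, one_mul, mul_one, zero_mul, mul_zero,
      Finset.sum_ite_eq', Finset.mem_univ, if_true]
    clear h3 htri h0 hv hc hq hspan1 hle hmem hspaneq hμc hT hT'
    split_ifs <;> subst_vars <;> simp_all
  -- step 6 : matrix argument
  set Cm : Matrix (Fin r) (Fin r) ℂ := Matrix.of (fun i j => c i j) with hCmdef
  have hmat : Cmᵀ * Matrix.diagonal (fun i => ω' i * ∑ d, c i d) * Cm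
      = Matrix.diagonal (fun a => (ω a : ℂ)) := by
    ext a b
    rw [Matrix.mul_apply]
    simp only [Matrix.mul_diagonal, Matrix.transpose_apply, Matrix.of_apply, hCmdef]
    have hre : ∀ i : Fin r, c i a * (ω' i * ∑ d, c i d) * c i b
        = ∑ d, ω' i * (c i a * c i b * c i d) := by
      intro i
      rw [Finset.mul_sum, Finset.mul_sum, Finset.sum_mul]
      exact Finset.sum_congr rfl (fun d _ => by ring)
    rw [Finset.sum_congr rfl (fun i _ => hre i), Finset.sum_comm]
    simp only [hten]
    by_cases hab : a = b
    · subst hab; simp [Matrix.diagonal_apply_eq]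
    · simp [hab, Matrix.diagonal_apply_ne _ hab]
  have hdet : Cm.det ≠ 0 := by
    intro h
    have hd := congrArg Matrix.det hmat
    rw [Matrix.det_mul, Matrix.det_mul, Matrix.det_transpose, h] at hd
    simp only [zero_mul, mul_zero, Matrix.det_diagonal] at hd
    exact (Finset.prod_ne_zero_iff.2 (fun a _ => hωc a)) hd.symm
  have hCu : IsUnit Cm.det := isUnit_iff_ne_zero.2 hdet
  have hCuT : IsUnit Cmᵀ.det := by rwa [Matrix.det_transpose, isUnit_iff_ne_zero]
  have hconj : ∀ (D E : Matrix (Fin r) (Fin r) ℂ), Cmᵀ * D * Cm = E → D = Cmᵀ⁻¹ * E * Cm⁻¹ := by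
    intro D E h
    calc D = Cmᵀ⁻¹ * Cmᵀ * D * (Cm * Cm⁻¹) := by
          rw [Matrix.nonsing_inv_mul _ hCuT, Matrix.mul_nonsing_inv _ hCu,
            Matrix.one_mul, Matrix.mul_one]
      _ = Cmᵀ⁻¹ * (Cmᵀ * D * Cm) * Cm⁻¹ := by simp only [Matrix.mul_assoc]
      _ = Cmᵀ⁻¹ * E * Cm⁻¹ := by rw [h]
  have hslice : ∀ a, Cmᵀ * Matrix.diagonal (fun i => ω' i * c i a) * Cm
      = Matrix.of (fun b d => (if b = a then (1:ℂ) else 0) * (if d = a then 1 else 0) * (ω a : ℂ)) := by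
    intro a
    ext b d
    rw [Matrix.mul_apply]
    simp only [Matrix.mul_diagonal, Matrix.transpose_apply, Matrix.of_apply, hCmdef]
    have hre : ∀ i : Fin r, c i b * (ω' i * c i a) * c i d = ω' i * (c i b * c i d * c i a) :=
      fun i => by ring
    rw [Finset.sum_congr rfl (fun i _ => hre i), hten b d a]
    clear hten htri h0 hv hc hq hspan1 hle hmem hspaneq hμc hT hT' hmat hconj
    split_ifs <;> subst_vars <;> simp_all
  have hentry : ∀ (a i j : Fin r), (Matrix.diagonal (fun i => ω' i * c i a)) i j
      = Cm⁻¹ a i * (ω a : ℂ) * Cm⁻¹ a j := by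
    intro a i j
    have h7 := hconj _ _ (hslice a)
    have h8 := congrFun (congrFun h7 i) j
    rw [← Matrix.transpose_nonsing_inv] at h8
    rw [h8, Matrix.mul_apply]
    simp only [Matrix.mul_apply, Matrix.transpose_apply, Matrix.of_apply, ite_mul, mul_ite,
      one_mul, zero_mul, mul_zero, mul_one, Finset.sum_ite_eq, Finset.sum_ite_eq',
      Finset.mem_univ, if_true]
    rw [Finset.sum_eq_single a]
    · simp only [if_pos rfl, Finset.sum_ite_eq', Finset.mem_univ, if_true]
    · intro b _ hb
      simp [hb]
    · intro h
      exact absurd (Finset.mem_univ _) h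
  have hoff : ∀ (a i j : Fin r), i ≠ j → Cm⁻¹ a i * Cm⁻¹ a j = 0 := by
    intro a i j hij
    have := hentry a i j
    rw [Matrix.diagonal_apply_ne _ hij] at this
    have h9 : (ω a : ℂ) * (Cm⁻¹ a i * Cm⁻¹ a j) = 0 := by linear_combination -this
    rcases mul_eq_zero.1 h9 with h | h
    · exact absurd h (hωc a)
    · exact h
  have hdiagid : ∀ (a i : Fin r), ω' i * c i a = Cm⁻¹ a i * (ω a : ℂ) * Cm⁻¹ a i := by
    intro a i
    have := hentry a i i
    rwa [Matrix.diagonal_apply_eq] at this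
  -- each column has a nonzero entry
  have hexist : ∀ a, ∃ i, c i a ≠ 0 := by
    intro a
    by_contra hcon
    push_neg at hcon
    have h10 := hten a a a
    simp only [hcon, mul_zero, zero_mul, Finset.sum_const_zero, if_pos rfl] at h10
    exact hωc a h10.symm
  have huniq : ∀ (a i j : Fin r), c i a ≠ 0 → c j a ≠ 0 → i = j := by
    intro a i j hi hj
    by_contra hij
    have h1 : Cm⁻¹ a i ≠ 0 := by
      intro h
      apply hi
      have := hdiagid a i
      rw [h, zero_mul, zero_mul] at this
      exact (mul_eq_zero.1 this).resolve_left (hω' i)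
    have h2 : Cm⁻¹ a j ≠ 0 := by
      intro h
      apply hj
      have := hdiagid a j
      rw [h, mul_zero] at this
      exact (mul_eq_zero.1 this).resolve_left (hω' j)
    exact mul_ne_zero h1 h2 (hoff a i j hij)
  choose f hf using hexist
  have hf2 : ∀ (a i : Fin r), c i a ≠ 0 → i = f a := fun a i hi => huniq a i (f a) hi (hf a)
  have hzero : ∀ (a i : Fin r), i ≠ f a → c i a = 0 := by
    intro a i hi
    by_contra h
    exact hi (hf2 a i h)
  have hfinj : Function.Injective f := by
    intro a b hab
    by_contra hne
    set w : Fin r → ℂ :=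
      fun t => (if t = a then c (f a) b else 0) - (if t = b then c (f a) a else 0) with hwdef
    have hker : Cm.mulVec w = 0 := by
      funext k
      simp only [Matrix.mulVec, dotProduct, hwdef, Pi.zero_apply, mul_sub,
        Finset.sum_sub_distrib, mul_ite, mul_zero, Finset.sum_ite_eq',
        Finset.mem_univ, if_true, hCmdef, Matrix.of_apply]
      by_cases hk : k = f a
      · subst hk; ring
      · rw [hzero a k hk, hzero b k (by rw [← hab]; exact hk), zero_mul, zero_mul, sub_zero]
    have hw0 : w = 0 := by
      have h1 : Cm⁻¹.mulVec (Cm.mulVec w) = w := by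
        rw [Matrix.mulVec_mulVec, Matrix.nonsing_inv_mul _ hCu, Matrix.one_mulVec]
      rw [hker, Matrix.mulVec_zero] at h1
      exact h1.symm
    have hwa : w a = 0 := by rw [hw0]; rfl
    rw [hwdef] at hwa
    simp only [if_pos rfl, if_neg hne, sub_zero] at hwa
    exact hf b (hab ▸ hwa)
  have hfbij : Function.Bijective f := Finite.injective_iff_bijective.1 hfinj
  set σ : Equiv.Perm (Fin r) := Equiv.ofBijective f hfbij with hσdef
  have hσapp : ∀ a, σ a = f a := fun a => rfl
  refine ⟨σ.symm, fun i => c i (σ.symm i), fun i => ?_⟩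
  have hfa : f (σ.symm i) = i := by rw [← hσapp]; exact σ.apply_symm_apply i
  have hlam : c i (σ.symm i) ≠ 0 := by
    have := hf (σ.symm i)
    rwa [hfa] at this
  refine ⟨hlam, ?_, ?_⟩
  · have hsum : ∑ j, c i j • μc j = c i (σ.symm i) • μc (σ.symm i) := by
      refine Finset.sum_eq_single _ (fun b _ hb => ?_) (fun h => absurd (Finset.mem_univ _) h)
      have hcz : c i b = 0 := by
        by_contra h
        apply hb
        have h12 := hf2 b i h
        rw [h12] at hfa ⊢
        rw [hfinj hfa]
      rw [hcz, zero_smul]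
    rw [← hc i, hsum]
  · have h5 := hten (σ.symm i) (σ.symm i) (σ.symm i)
    have hsum5 : ∑ k, ω' k * (c k (σ.symm i) * c k (σ.symm i) * c k (σ.symm i))
        = ω' i * (c i (σ.symm i) * c i (σ.symm i) * c i (σ.symm i)) := by
      refine Finset.sum_eq_single _ (fun b _ hb => ?_) (fun h => absurd (Finset.mem_univ _) h)
      have hcz : c b (σ.symm i) = 0 := hzero (σ.symm i) b (by rwa [hfa])
      rw [hcz]; ring
    rw [hsum5, if_pos rfl, if_pos rfl] at h5
    have h6 : ω' i * (c i (σ.symm i)) ^ 3 = (ω (σ.symm i) : ℂ) := by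
      rw [← h5]; ring
    have hz : (c i (σ.symm i)) ^ (-3 : ℤ) = ((c i (σ.symm i)) ^ 3)⁻¹ := by
      rw [_root_.zpow_neg]
      norm_cast
    rw [hz, ← h6]
    field_simp
end

section
/- Let T ∈ ℂ[X]_d admit a decomposition T = Σ_{i=1}^r ω_i (ξ_i·X)^d with ω_i ∈ ℂ and ξ_i ∈ ℂ^m, and let 0 ≤ k ≤ d. Then H_T^{k,d−k} = Σ_{i=1}^r conj(ω_i) · conj(ξ_i)^{(k)} ⊗ conj(ξ_i)^{(d−k)}; in particular rank H_T^{k,d−k} ≤ r. -/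
open MvPolynomial

/-- The apolar product `⟨p,q⟩_d = Σ_{|α|=d} C(d,α) conj(p_α) q_α` of two homogeneous
polynomials of degree d, written in terms of the plain coefficients of p and q. -/
noncomputable def apolar {m : ℕ} (p q : MvPolynomial (Fin m) ℂ) : ℂ :=
  ∑ α ∈ p.support ∩ q.support,
    (starRingEnd ℂ) (MvPolynomial.coeff α p) * MvPolynomial.coeff α q /
      (Nat.multinomial α.support α : ℂ)

/-- The monomial `X^γ`. -/
noncomputable def monomOf {m : ℕ} (γ : Fin m → ℕ) : MvPolynomial (Fin m) ℂ :=
  ∏ i, X i ^ γ i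

/-- The Hankel matrix `H_T^{k,d-k}`: rows indexed by exponents α with |α| = k, columns
indexed by exponents β with |β| = d-k, entries `⟨T, X^{α+β}⟩_d`. -/
noncomputable def hankel (m d k : ℕ) (T : MvPolynomial (Fin m) ℂ) :
    Matrix (Finset.Nat.antidiagonalTuple m k) (Finset.Nat.antidiagonalTuple m (d - k)) ℂ :=
  fun α β => apolar T (monomOf ((α : Fin m → ℕ) + (β : Fin m → ℕ)))

/-- The vector `ξ^{(k)} = (ξ^α)_{|α|=k}`. -/
noncomputable def powVec {m : ℕ} (k : ℕ) (ξ : Fin m → ℂ) :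
    Finset.Nat.antidiagonalTuple m k → ℂ :=
  fun α => ∏ j, ξ j ^ (α : Fin m → ℕ) j

/-! ### Auxiliary lemmas -/

lemma monomOf_eq' {m : ℕ} (γ : Fin m → ℕ) :
    monomOf γ = monomial (Finsupp.equivFunOnFinite.symm γ) (1 : ℂ) := by
  rw [monomOf, monomial_eq, C_1, one_mul, Finsupp.prod,
    Finset.prod_subset (Finset.subset_univ (Finsupp.equivFunOnFinite.symm γ).support)]
  · simp
  · intro i _ hi
    simp [Finsupp.notMem_support_iff.1 hi]

lemma multinomial_univ_eq {m : ℕ} (γ : Fin m →₀ ℕ) :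
    Nat.multinomial Finset.univ γ = Nat.multinomial γ.support γ := by
  unfold Nat.multinomial
  rw [Finset.sum_subset (Finset.subset_univ γ.support),
    Finset.prod_subset (Finset.subset_univ γ.support)]
  · intro i _ hi; simp [Finsupp.notMem_support_iff.1 hi]
  · intro i _ hi; simp [Finsupp.notMem_support_iff.1 hi]

lemma apolar_monomOf {m : ℕ} (T : MvPolynomial (Fin m) ℂ) (γ : Fin m → ℕ) :
    apolar T (monomOf γ)
      = (starRingEnd ℂ) (MvPolynomial.coeff (Finsupp.equivFunOnFinite.symm γ) T) /
          (Nat.multinomial Finset.univ (Finsupp.equivFunOnFinite.symm γ) : ℂ) := by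
  set γ' : Fin m →₀ ℕ := Finsupp.equivFunOnFinite.symm γ
  rw [monomOf_eq', apolar, support_monomial, if_neg one_ne_zero, multinomial_univ_eq]
  by_cases h : γ' ∈ T.support
  · rw [Finset.inter_singleton_of_mem h, Finset.sum_singleton, coeff_monomial, if_pos rfl,
      mul_one]
  · rw [Finset.inter_singleton_of_notMem h, Finset.sum_empty,
      MvPolynomial.notMem_support_iff.1 h, map_zero, zero_div]

lemma coeff_linForm_pow {m d : ℕ} (v : Fin m → ℂ) (γ : Fin m →₀ ℕ)
    (hγ : ∑ i, γ i = d) :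
    MvPolynomial.coeff γ (linForm v ^ d)
      = (Nat.multinomial Finset.univ γ : ℂ) * ∏ j, v j ^ γ j := by
  have hterm : ∀ k : Fin m → ℕ,
      (Nat.multinomial Finset.univ k : MvPolynomial (Fin m) ℂ) * ∏ i, (C (v i) * X i) ^ k i
        = monomial (Finsupp.equivFunOnFinite.symm k)
            ((Nat.multinomial Finset.univ k : ℂ) * ∏ i, v i ^ k i) := by
    intro k
    have := monomOf_eq' k
    rw [monomOf] at this
    simp only [mul_pow, Finset.prod_mul_distrib, ← C_pow, ← map_prod, this,
      ← C_eq_coe_nat, C_mul_monomial, mul_one]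
  rw [linForm, Finset.sum_pow_eq_sum_piAntidiag, MvPolynomial.coeff_sum]
  rw [Finset.sum_eq_single (⇑γ)]
  · rw [hterm, coeff_monomial, if_pos (by ext i; simp)]
  · intro k hk hne
    have hne' : (Finsupp.equivFunOnFinite.symm k) ≠ γ := by
      intro h; apply hne; rw [← h]
      exact Finsupp.equivFunOnFinite.apply_symm_apply k
    rw [hterm, coeff_monomial, if_neg hne']
  · intro h
    exact absurd (by simp [hγ]) h

lemma matrix_rank_add_le {n p : Type*} [Fintype n] [Fintype p] [DecidableEq p]
    (A B : Matrix n p ℂ) : (A + B).rank ≤ A.rank + B.rank := by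
  unfold Matrix.rank
  have h : LinearMap.range (A + B).mulVecLin ≤
      LinearMap.range A.mulVecLin ⊔ LinearMap.range B.mulVecLin := by
    rintro x ⟨y, rfl⟩
    exact Submodule.mem_sup.2 ⟨A.mulVecLin y, ⟨y, rfl⟩, B.mulVecLin y, ⟨y, rfl⟩,
      by simp [Matrix.add_mulVec, Matrix.mulVecLin]⟩
  exact le_trans (Submodule.finrank_mono h)
    (Submodule.finrank_add_le_finrank_add_finrank _ _)

lemma matrix_rank_sum_le {n p : Type*} [Fintype n] [Fintype p] [DecidableEq p]
    {r : ℕ} (M : Fin r → Matrix n p ℂ) : (∑ i, M i).rank ≤ ∑ i, (M i).rank := by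
  induction r with
  | zero => simp
  | succ r ih =>
    rw [Fin.sum_univ_castSucc, Fin.sum_univ_castSucc]
    exact le_trans (matrix_rank_add_le _ _) (add_le_add (ih _) le_rfl)

lemma rank_smul_vecMulVec {n p : Type*} [Fintype n] [Fintype p] [DecidableEq p]
    (c : ℂ) (u : n → ℂ) (v : p → ℂ) : (c • Matrix.vecMulVec u v).rank ≤ 1 := by
  have h : c • Matrix.vecMulVec u v = Matrix.vecMulVec (c • u) v := by
    ext i j; simp [Matrix.vecMulVec_apply, mul_assoc]
  rw [h, Matrix.vecMulVec_eq (Fin 1)]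
  exact le_trans (Matrix.rank_mul_le_right _ _)
    (le_trans (Matrix.rank_le_card_height _) (by simp))

/-- for T = Σ ω_i (ξ_i·X)^d and 0 ≤ k ≤ d,
H_T^{k,d-k} = Σ conj(ω_i) conj(ξ_i)^{(k)} ⊗ conj(ξ_i)^{(d-k)};
in particular rank H_T^{k,d-k} ≤ r. -/
theorem statement_12 (m d k r : ℕ) (hk : k ≤ d)
    (ω : Fin r → ℂ) (ξ : Fin r → Fin m → ℂ)
    (T : MvPolynomial (Fin m) ℂ) (hT : T = ∑ i, C (ω i) * linForm (ξ i) ^ d) :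
    hankel m d k T
      = ∑ i, (starRingEnd ℂ) (ω i) •
          Matrix.vecMulVec (powVec k fun j => (starRingEnd ℂ) (ξ i j))
            (powVec (d - k) fun j => (starRingEnd ℂ) (ξ i j)) ∧
    (hankel m d k T).rank ≤ r := by
  have heq : hankel m d k T
      = ∑ i, (starRingEnd ℂ) (ω i) •
          Matrix.vecMulVec (powVec k fun j => (starRingEnd ℂ) (ξ i j))
            (powVec (d - k) fun j => (starRingEnd ℂ) (ξ i j)) := by
    ext α β
    set γ : Fin m → ℕ := (α : Fin m → ℕ) + (β : Fin m → ℕ) with hγdef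
    set γ' : Fin m →₀ ℕ := Finsupp.equivFunOnFinite.symm γ with hγ'def
    have hαs : ∑ i, (α : Fin m → ℕ) i = k := Finset.Nat.mem_antidiagonalTuple.mp α.2
    have hβs : ∑ i, (β : Fin m → ℕ) i = d - k := Finset.Nat.mem_antidiagonalTuple.mp β.2
    have hcoe : ⇑γ' = γ := Finsupp.equivFunOnFinite.apply_symm_apply γ
    have hsum : ∑ i, γ' i = d := by
      rw [show (fun i => γ' i) = γ from hcoe]
      simp only [hγdef, Pi.add_apply, Finset.sum_add_distrib, hαs, hβs]
      omega
    have hmult : (Nat.multinomial Finset.univ γ' : ℂ) ≠ 0 := by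
      exact_mod_cast Nat.pos_iff_ne_zero.mp (Nat.multinomial_pos _ _)
    have hcoeff : MvPolynomial.coeff γ' T
        = ∑ i, ω i * ((Nat.multinomial Finset.univ γ' : ℂ) * ∏ j, ξ i j ^ γ' j) := by
      rw [hT, MvPolynomial.coeff_sum]
      refine Finset.sum_congr rfl fun i _ => ?_
      rw [coeff_C_mul, coeff_linForm_pow _ _ hsum]
    show apolar T (monomOf γ) = _
    rw [apolar_monomOf, ← hγ'def, hcoeff, map_sum, Finset.sum_div]
    rw [Matrix.sum_apply]
    refine Finset.sum_congr rfl fun i _ => ?_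
    rw [Matrix.smul_apply, Matrix.vecMulVec_apply, map_mul, map_mul, map_natCast, map_prod]
    simp only [map_pow]
    rw [smul_eq_mul]
    have hprod : (∏ j, (starRingEnd ℂ) (ξ i j) ^ γ' j)
        = powVec k (fun j => (starRingEnd ℂ) (ξ i j)) α *
          powVec (d - k) (fun j => (starRingEnd ℂ) (ξ i j)) β := by
      rw [powVec, powVec, ← Finset.prod_mul_distrib]
      refine Finset.prod_congr rfl fun j _ => ?_
      rw [show γ' j = (α : Fin m → ℕ) j + (β : Fin m → ℕ) j from by
        rw [show γ' j = γ j from congrFun hcoe j]; rfl, pow_add]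
    rw [hprod]
    field_simp
  refine ⟨heq, ?_⟩
  rw [heq]
  refine le_trans (matrix_rank_sum_le _) ?_
  calc ∑ i : Fin r, ((starRingEnd ℂ) (ω i) •
          Matrix.vecMulVec (powVec k fun j => (starRingEnd ℂ) (ξ i j))
            (powVec (d - k) fun j => (starRingEnd ℂ) (ξ i j))).rank
      ≤ ∑ _i : Fin r, 1 := Finset.sum_le_sum fun i _ => rank_smul_vecMulVec _ _ _
    _ = r := by simp
end
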